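/- arXiv:0711.2814 — 2 statements merged into one kernel-verified Lean document; each statement's English description precedes it below -/
import Mathlib

section
/- For any monotone nondecreasing function θ : ℝ → ℝ, any nonnegative reals a_i (i = 1,…,N) and nonnegative reals b_S indexed by nonempty subsets S ⊆ {1,…,N}, the map Θ : ℝ^N → ℝ^N with i-th component Θ(u)_i = a_i θ(u_i) - Σ_{S ∋ i} (b_S/|S|) θ(1 - Σ_{j∈S} u_j) is a monotone operator, i.e. (Θ(u) - Θ(v)) · (u - v) ≥ 0 for all u, v ∈ ℝ^N. -/
/-!
Pairing `Θ(u) - Θ(v)` with `u - v` and exchanging the sums over `i` and `S ∋ i`, the form splits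
into the terms `a i (θ(u i) - θ(v i))(u i - v i)` and, for each `S`, `b S / |S|` times
`(θ(1 - Σ_S v) - θ(1 - Σ_S u)) Σ_{i∈S} (u i - v i)`. Since `Σ_{i∈S} (u i - v i)` is exactly the
increment `(1 - Σ_S v) - (1 - Σ_S u)`, every term is a nonnegative weight times
`(θ x - θ y)(x - y) ≥ 0`.
-/

open Finset

section LinearOrderedCommRing

variable {R : Type*} [CommRing R] [LinearOrder R] [IsStrictOrderedRing R]

theorem Monotone.sub_mul_sub_nonneg {θ : R → R} (hθ : Monotone θ) (x y : R) :
    0 ≤ (θ x - θ y) * (x - y) :=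
  (monovary_id_iff.2 hθ).sub_mul_sub_nonneg y x

theorem Monotone.sum_sub_mul_sub_nonneg_of_one_sub_sum {ι : Type*} {θ : R → R}
    (hθ : Monotone θ) (S : Finset ι) (u v : ι → R) :
    0 ≤ ∑ i ∈ S, (θ (1 - ∑ j ∈ S, v j) - θ (1 - ∑ j ∈ S, u j)) * (u i - v i) := by
  rw [← mul_sum, sum_sub_distrib]
  convert hθ.sub_mul_sub_nonneg (1 - ∑ j ∈ S, v j) (1 - ∑ j ∈ S, u j) using 2
  ring

end LinearOrderedCommRing

theorem sum_filter_mem_comm {ι M : Type*} [Fintype ι] [DecidableEq ι] [AddCommMonoid M]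
    (f : Finset ι → ι → M) :
    ∑ i, ∑ S ∈ univ.powerset.filter (fun S => i ∈ S), f S i = ∑ S ∈ univ.powerset, ∑ i ∈ S, f S i :=
  sum_comm' fun i S => by simp [and_comm]

theorem stmt_1_general (N : ℕ) (θ : ℝ → ℝ) (hθ : Monotone θ)
    (a : Fin N → ℝ) (ha : ∀ i, 0 ≤ a i)
    (b : Finset (Fin N) → ℝ) (hb : ∀ S : Finset (Fin N), S.Nonempty → 0 ≤ b S)
    (u v : Fin N → ℝ) :
    0 ≤ ∑ i : Fin N,
      ((a i * θ (u i) -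
          ∑ S ∈ Finset.univ.powerset.filter (fun S => i ∈ S),
            (b S / (S.card : ℝ)) * θ (1 - ∑ j ∈ S, u j)) -
        (a i * θ (v i) -
          ∑ S ∈ Finset.univ.powerset.filter (fun S => i ∈ S),
            (b S / (S.card : ℝ)) * θ (1 - ∑ j ∈ S, v j))) * (u i - v i) := by
  calc 0 ≤ ∑ i, a i * ((θ (u i) - θ (v i)) * (u i - v i)) +
        ∑ S ∈ univ.powerset, b S / S.card *
          ∑ i ∈ S, (θ (1 - ∑ j ∈ S, v j) - θ (1 - ∑ j ∈ S, u j)) * (u i - v i) := by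
        refine add_nonneg (sum_nonneg fun i _ => mul_nonneg (ha i) (hθ.sub_mul_sub_nonneg _ _))
          (sum_nonneg fun S _ => mul_nonneg ?_ (hθ.sum_sub_mul_sub_nonneg_of_one_sub_sum S u v))
        -- `b ∅` is unconstrained, but its weight is `b ∅ / 0 = 0`.
        rcases S.eq_empty_or_nonempty with rfl | hS
        · simp
        · exact div_nonneg (hb S hS) S.card.cast_nonneg
    _ = _ := by
        simp only [mul_sum, ← sum_filter_mem_comm, ← sum_add_distrib]
        refine sum_congr rfl fun i _ => ?_
        simp only [sub_mul, mul_sub, sum_sub_distrib, sum_mul, mul_assoc]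
        ring

theorem stmt_1 (N : ℕ) (hN : 0 < N) (θ : ℝ → ℝ) (hθ : Monotone θ)
    (a : Fin N → ℝ) (ha : ∀ i, 0 ≤ a i)
    (b : Finset (Fin N) → ℝ) (hb : ∀ S : Finset (Fin N), S.Nonempty → 0 ≤ b S)
    (u v : Fin N → ℝ) :
    0 ≤ ∑ i : Fin N,
      ((a i * θ (u i) -
          ∑ S ∈ Finset.univ.powerset.filter (fun S => i ∈ S),
            (b S / (S.card : ℝ)) * θ (1 - ∑ j ∈ S, u j)) -
        (a i * θ (v i) -
          ∑ S ∈ Finset.univ.powerset.filter (fun S => i ∈ S),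
            (b S / (S.card : ℝ)) * θ (1 - ∑ j ∈ S, v j))) * (u i - v i) :=
  stmt_1_general N θ hθ a ha b hb u v
end

section
/- Weak-* convergence of indicator functions to an indicator function implies strong L^p convergence: if χ_ν are indicator functions of measurable subsets of a finite measure set ω, χ_ν ⇀ χ weak-* in L^∞(ω), and χ is itself the indicator function of a measurable set, then χ_ν → χ strongly in L^p(ω) for every 1 ≤ p < ∞. -/
open MeasureTheory Filter

open scoped symmDiff ENNReal Topology

/-! Since `|χ_A - χ_B| ^ p = χ_{A ∆ B}`, the integrals in question are
`μ (A ν ∆ B) = μ (A ν) + μ B - 2 μ (A ν ∩ B)`. Testing the weak-* convergence against `g = 1` and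
`g = χ_B` gives `μ (A ν) → μ B` and `μ (A ν ∩ B) → μ B`, hence `μ (A ν ∆ B) → 0`. -/

lemma Set.abs_indicator_one_sub_indicator_one_rpow {α : Type*} {s t : Set α} {p : ℝ}
    (hp : p ≠ 0) (x : α) :
    |s.indicator 1 x - t.indicator (1 : α → ℝ) x| ^ p = (s ∆ t).indicator 1 x := by
  rw [← abs_indicator_symmDiff]
  by_cases hx : x ∈ s ∆ t <;> simp [hx, hp]

namespace MeasureTheory

variable {α : Type*} [MeasurableSpace α] {μ : Measure α} {s t : Set α}

lemma measureReal_symmDiff_eq_add_sub_two_mul_inter (hs : MeasurableSet s)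
    (ht : MeasurableSet t) (h₁ : μ s ≠ ∞ := by finiteness) (h₂ : μ t ≠ ∞ := by finiteness) :
    μ.real (s ∆ t) = μ.real s + μ.real t - 2 * μ.real (s ∩ t) := by
  have h_symmDiff : μ.real (s ∆ t) = μ.real (s \ t) + μ.real (t \ s) :=
    measureReal_union disjoint_sdiff_sdiff (ht.diff hs)
      (measure_ne_top_of_subset Set.sdiff_subset h₁)
      (measure_ne_top_of_subset Set.sdiff_subset h₂)
  have hs_split := measureReal_sdiff_add_inter (μ := μ) ht h₁
  have ht_split := measureReal_sdiff_add_inter (μ := μ) hs h₂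
  rw [Set.inter_comm] at ht_split
  linarith

lemma integral_indicator_one_mul_indicator_one (hs : MeasurableSet s) (ht : MeasurableSet t) :
    ∫ x, s.indicator 1 x * t.indicator (1 : α → ℝ) x ∂μ = μ.real (s ∩ t) := by
  rw [← integral_indicator_one (hs.inter ht), Set.inter_indicator_one]
  rfl

lemma tendsto_measureReal_symmDiff_nhds_zero [IsFiniteMeasure μ] {ι : Type*} {l : Filter ι}
    {A : ι → Set α} (hA : ∀ i, MeasurableSet (A i)) (ht : MeasurableSet t)
    (h_meas : Tendsto (fun i => μ.real (A i)) l (𝓝 (μ.real t)))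
    (h_inter : Tendsto (fun i => μ.real (A i ∩ t)) l (𝓝 (μ.real t))) :
    Tendsto (fun i => μ.real (A i ∆ t)) l (𝓝 0) := by
  have h_lim := (h_meas.add_const (μ.real t)).sub (h_inter.const_mul 2)
  rw [show μ.real t + μ.real t - 2 * μ.real t = 0 by ring] at h_lim
  refine h_lim.congr fun i => ?_
  rw [measureReal_symmDiff_eq_add_sub_two_mul_inter (hA i) ht]

end MeasureTheory

theorem stmt_17 {α : Type*} [MeasurableSpace α] (μ : Measure α)
    [IsFiniteMeasure μ]
    (A : ℕ → Set α) (B : Set α)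
    (hA : ∀ ν, MeasurableSet (A ν)) (hB : MeasurableSet B)
    -- weak-* convergence in L^∞: χ_{A ν} ⇀ χ_B against every L¹ function
    (hconv : ∀ g : α → ℝ, Integrable g μ →
      Tendsto (fun ν => ∫ x, Set.indicator (A ν) (fun _ => (1:ℝ)) x * g x ∂μ)
        atTop (nhds (∫ x, Set.indicator B (fun _ => (1:ℝ)) x * g x ∂μ))) :
    ∀ p : ℝ, 1 ≤ p →
      Tendsto (fun ν => ∫ x,
          |Set.indicator (A ν) (fun _ => (1:ℝ)) x -
            Set.indicator B (fun _ => (1:ℝ)) x| ^ p ∂μ)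
        atTop (nhds 0) := by
  intro p hp
  simp only [← Pi.one_def] at hconv ⊢
  have h_meas := hconv 1 (integrable_const 1)
  have h_inter :=
    hconv (B.indicator 1) ((integrable_indicator_iff hB).2 (integrable_const 1).integrableOn)
  simp only [Pi.one_apply, mul_one, integral_indicator_one (hA _),
    integral_indicator_one hB] at h_meas
  simp only [integral_indicator_one_mul_indicator_one (hA _) hB,
    integral_indicator_one_mul_indicator_one hB hB, Set.inter_self] at h_inter
  simp only [Set.abs_indicator_one_sub_indicator_one_rpow (by linarith : p ≠ 0),
    integral_indicator_one ((hA _).symmDiff hB)]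
  exact tendsto_measureReal_symmDiff_nhds_zero hA hB h_meas h_inter
end
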